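/- The combinator T = λx.λy. y x satisfies T_(3) = T_(2), i.e., T T T is βη-equivalent to T T, and T_(2) is not βη-equivalent to T. -/

import Mathlib

/-- Untyped lambda terms in de Bruijn representation. -/
inductive Lam where
  | var : Nat → Lam
  | app : Lam → Lam → Lam
  | lam : Lam → Lam
deriving DecidableEq

namespace Lam

/-- Lift (shift by one) all free variables with index ≥ `c`. -/
def lift (c : Nat) : Lam → Lam
  | var n => if n < c then var n else var (n + 1)
  | app a b => app (lift c a) (lift c b)
  | lam a => lam (lift (c + 1) a)

/-- Substitute `s` for the free variable with index `d`. -/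
def subst (d : Nat) (s : Lam) : Lam → Lam
  | var n => if n = d then s else if d < n then var (n - 1) else var n
  | app a b => app (subst d s a) (subst d s b)
  | lam a => lam (subst (d + 1) (lift 0 s) a)

/-- One-step βη-reduction (compatible closure of β and η). -/
inductive Step : Lam → Lam → Prop
  | beta (a b : Lam) : Step (app (lam a) b) (subst 0 b a)
  | eta (a : Lam) : Step (lam (app (lift 0 a) (var 0))) a
  | appL {a a' : Lam} (b : Lam) : Step a a' → Step (app a b) (app a' b)
  | appR (a : Lam) {b b' : Lam} : Step b b' → Step (app a b) (app a b')
  | xi {a a' : Lam} : Step a a' → Step (lam a) (lam a')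

/-- βη-equivalence: the equivalence relation generated by one-step βη-reduction. -/
def BetaEtaEq (a b : Lam) : Prop := Relation.EqvGen Step a b

/-- The B combinator λf.λg.λx. f (g x). -/
def B : Lam := lam (lam (lam (app (var 2) (app (var 1) (var 0)))))

/-- `flat X n` is the (n+1)-fold flat left application, i.e. `X_(n+1)`:
`flat X 0 = X = X_(1)` and `flat X (n+1) = (flat X n) X = X_(n+2)`. -/
def flat (X : Lam) : Nat → Lam
  | 0 => X
  | n + 1 => app (flat X n) X

end Lam

open Lam

/-- The T combinator λx.λy. y x. -/
def T : Lam := lam (lam (app (var 0) (var 1)))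

/-! `T T T →β (λy. y T) T →β T T`. For the other half, βη-reduction is confluent: parallel
βη-reduction has the triangle property with respect to the complete development `cd`, hence
the diamond property, so βη-equal terms have a common parallel reduct. But `T` has no reduct
other than itself, while every reduct of `T T` is `T T` or `λy. y T`. -/

open Relation

namespace Lam

theorem lift_lift (t : Lam) {c c' : ℕ} (h : c ≤ c') :
    lift c (lift c' t) = lift (c' + 1) (lift c t) := by
  induction t generalizing c c' with
  | var n => simp only [lift]; split_ifs <;> simp only [lift] <;> split_ifs <;> grind
  | app a b iha ihb => simp only [lift, iha h, ihb h]
  | lam a iha => simp only [lift, iha (Nat.succ_le_succ h)]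

theorem lift_subst_of_le (t s : Lam) {c d : ℕ} (h : c ≤ d) :
    lift c (subst d s t) = subst (d + 1) (lift c s) (lift c t) := by
  induction t generalizing s c d with
  | var n => simp only [subst, lift]; split_ifs <;> simp only [subst, lift] <;> split_ifs <;> grind
  | app a b iha ihb => simp only [subst, lift, iha s h, ihb s h]
  | lam a iha =>
    simp only [subst, lift, iha _ (Nat.succ_le_succ h), lift_lift s (Nat.zero_le c)]

theorem lift_subst_of_ge (t s : Lam) {c d : ℕ} (h : d ≤ c) :
    lift c (subst d s t) = subst d (lift c s) (lift (c + 1) t) := by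
  induction t generalizing s c d with
  | var n => simp only [subst, lift]; split_ifs <;> simp only [subst, lift] <;> split_ifs <;> grind
  | app a b iha ihb => simp only [subst, lift, iha s h, ihb s h]
  | lam a iha =>
    simp only [subst, lift, iha _ (Nat.succ_le_succ h), lift_lift s (Nat.zero_le c)]

@[simp]
theorem subst_lift (t s : Lam) (c : ℕ) : subst c s (lift c t) = t := by
  induction t generalizing s c with
  | var n => simp only [lift]; split_ifs <;> simp only [subst] <;> split_ifs <;> grind
  | app a b iha ihb => simp only [lift, subst, iha, ihb]
  | lam a iha => simp only [lift, subst, iha]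

@[simp]
theorem subst_var_lift_succ (t : Lam) (c : ℕ) : subst c (var c) (lift (c + 1) t) = t := by
  induction t generalizing c with
  | var n => simp only [lift]; split_ifs <;> simp only [subst] <;> split_ifs <;> grind
  | app a b iha ihb => simp only [lift, subst, iha, ihb]
  | lam a iha => simp only [lift, subst, Nat.not_lt_zero, if_false, iha]

theorem subst_subst (t s u : Lam) {d e : ℕ} (h : e ≤ d) :
    subst d u (subst e s t) = subst e (subst d u s) (subst (d + 1) (lift e u) t) := by
  induction t generalizing s u d e with
  | var n =>
    simp only [subst]
    split_ifs <;> simp only [subst, subst_lift] <;> (try split_ifs) <;> grind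
  | app a b iha ihb => simp only [subst, iha s u h, ihb s u h]
  | lam a iha =>
    simp only [subst, iha _ _ (Nat.succ_le_succ h), lift_subst_of_le s u (Nat.zero_le d),
      lift_lift u (Nat.zero_le e)]

theorem lift_eq_app {c : ℕ} {t p q : Lam} (h : lift c t = app p q) :
    ∃ t₁ t₂, t = app t₁ t₂ ∧ p = lift c t₁ ∧ q = lift c t₂ := by
  cases t with
  | var n => simp only [lift] at h; split_ifs at h
  | app t₁ t₂ => cases h; exact ⟨t₁, t₂, rfl, rfl, rfl⟩
  | lam t₁ => cases h

theorem lift_eq_lam {c : ℕ} {t p : Lam} (h : lift c t = lam p) :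
    ∃ t₁, t = lam t₁ ∧ p = lift (c + 1) t₁ := by
  cases t with
  | var n => simp only [lift] at h; split_ifs at h
  | app t₁ t₂ => cases h
  | lam t₁ => cases h; exact ⟨t₁, rfl, rfl⟩

theorem lift_eq_var_zero {c : ℕ} {t : Lam} (h : lift c t = var 0) : t = var 0 := by
  cases t with
  | var n => simp only [lift] at h; split_ifs at h <;> grind
  | app t₁ t₂ => cases h
  | lam t₁ => cases h

theorem exists_lift_of_lift_succ_eq_lift {t p : Lam} {c c' : ℕ} (hc : c' ≤ c)
    (h : lift (c + 1) t = lift c' p) : ∃ q, t = lift c' q ∧ p = lift c q := by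
  induction t generalizing p c c' with
  | var n =>
    cases p with
    | var m =>
      refine ⟨var (if n < c' then n else n - 1), ?_, ?_⟩ <;>
        simp only [lift] at h ⊢ <;> split_ifs at h ⊢ <;> grind
    | app _ _ => simp only [lift] at h; split_ifs at h
    | lam _ => simp only [lift] at h; split_ifs at h
  | app a b iha ihb =>
    obtain ⟨p₁, p₂, rfl, h₁, h₂⟩ := lift_eq_app h.symm
    obtain ⟨q₁, rfl, rfl⟩ := iha hc h₁
    obtain ⟨q₂, rfl, rfl⟩ := ihb hc h₂
    exact ⟨app q₁ q₂, rfl, rfl⟩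
  | lam a iha =>
    obtain ⟨p₁, rfl, h₁⟩ := lift_eq_lam h.symm
    obtain ⟨q₁, rfl, rfl⟩ := iha (Nat.succ_le_succ hc) h₁
    exact ⟨lam q₁, rfl, rfl⟩

inductive Par : Lam → Lam → Prop
  | var (n : ℕ) : Par (var n) (var n)
  | app {a a' b b' : Lam} : Par a a' → Par b b' → Par (app a b) (app a' b')
  | lam {a a' : Lam} : Par a a' → Par (lam a) (lam a')
  | beta {a a' b b' : Lam} : Par a a' → Par b b' → Par (app (lam a) b) (subst 0 b' a')
  | eta {a a' : Lam} : Par a a' → Par (lam (app (lift 0 a) (var 0))) a'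

namespace Par

theorem refl : ∀ t : Lam, Par t t
  | .var n => .var n
  | .app a b => .app (refl a) (refl b)
  | .lam a => .lam (refl a)

theorem of_step {a b : Lam} (h : Step a b) : Par a b := by
  induction h with
  | beta a b => exact .beta (refl a) (refl b)
  | eta a => exact .eta (refl a)
  | appL b _ ih => exact .app ih (refl b)
  | appR a _ ih => exact .app (refl a) ih
  | xi _ ih => exact .lam ih

theorem lift {a b : Lam} (h : Par a b) (c : ℕ) : Par (Lam.lift c a) (Lam.lift c b) := by
  induction h generalizing c with
  | var n => exact refl _
  | app _ _ iha ihb => exact .app (iha c) (ihb c)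
  | lam _ iha => exact .lam (iha (c + 1))
  | @beta a a' b b' _ _ iha ihb =>
    rw [lift_subst_of_ge a' b' (Nat.zero_le c)]
    exact .beta (iha (c + 1)) (ihb c)
  | @eta a a' _ iha =>
    simp only [Lam.lift, Nat.zero_lt_succ, if_true, ← lift_lift a (Nat.zero_le c)]
    exact .eta (iha c)

theorem subst {a a' b b' : Lam} (ha : Par a a') (hb : Par b b') (d : ℕ) :
    Par (Lam.subst d b a) (Lam.subst d b' a') := by
  induction ha generalizing b b' d with
  | var n => simp only [Lam.subst]; split_ifs <;> first | exact hb | exact refl _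
  | app _ _ iha ihb => exact .app (iha hb d) (ihb hb d)
  | lam _ iha => exact .lam (iha (hb.lift 0) (d + 1))
  | @beta p p' q q' _ _ ihp ihq =>
    rw [Lam.subst, subst_subst p' q' b' (Nat.zero_le d)]
    exact .beta (ihp (hb.lift 0) (d + 1)) (ihq hb d)
  | @eta p p' _ ihp =>
    simp only [Lam.subst, Nat.not_lt_zero, if_false,
      ← lift_subst_of_le p b (Nat.zero_le d)]
    exact .eta (ihp hb d)

theorem exists_of_lift {a b : Lam} {c : ℕ} (h : Par (Lam.lift c a) b) :
    ∃ b', b = Lam.lift c b' ∧ Par a b' := by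
  generalize hx : Lam.lift c a = x at h
  induction h generalizing a c with
  | var n => exact ⟨a, hx.symm, refl a⟩
  | app _ _ ihp ihq =>
    obtain ⟨a₁, a₂, rfl, rfl, rfl⟩ := lift_eq_app hx
    obtain ⟨b₁, rfl, hb₁⟩ := ihp rfl
    obtain ⟨b₂, rfl, hb₂⟩ := ihq rfl
    exact ⟨Lam.app b₁ b₂, rfl, .app hb₁ hb₂⟩
  | lam _ ihp =>
    obtain ⟨a₁, rfl, rfl⟩ := lift_eq_lam hx
    obtain ⟨b₁, rfl, hb₁⟩ := ihp rfl
    exact ⟨Lam.lam b₁, rfl, .lam hb₁⟩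
  | beta _ _ ihp ihq =>
    obtain ⟨a₁, a₂, rfl, h₁, rfl⟩ := lift_eq_app hx
    obtain ⟨a₀, rfl, rfl⟩ := lift_eq_lam h₁.symm
    obtain ⟨b₁, rfl, hb₁⟩ := ihp rfl
    obtain ⟨b₂, rfl, hb₂⟩ := ihq rfl
    exact ⟨Lam.subst 0 b₂ b₁, (lift_subst_of_ge b₁ b₂ (Nat.zero_le c)).symm,
      .beta hb₁ hb₂⟩
  | @eta p p' _ ihp =>
    obtain ⟨a₁, rfl, h₁⟩ := lift_eq_lam hx
    obtain ⟨u, v, rfl, h₂, h₃⟩ := lift_eq_app h₁.symm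
    obtain rfl := lift_eq_var_zero h₃.symm
    obtain ⟨q, rfl, rfl⟩ := exists_lift_of_lift_succ_eq_lift (Nat.zero_le c) h₂.symm
    obtain ⟨b₁, rfl, hb₁⟩ := ihp rfl
    exact ⟨b₁, rfl, .eta hb₁⟩

theorem lam_inv {a b : Lam} (h : Par (Lam.lam a) b) :
    (∃ a', b = Lam.lam a' ∧ Par a a') ∨
      ∃ p, a = Lam.app (Lam.lift 0 p) (Lam.var 0) ∧ Par p b := by
  cases h with
  | lam h => exact .inl ⟨_, rfl, h⟩
  | eta h => exact .inr ⟨_, rfl, h⟩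

/-- The second case arises when `p = λ r` and the β-redex `(λ (lift 1 r)) 0` is contracted. -/
theorem etaBody_inv {p e : Lam} (h : Par (Lam.app (Lam.lift 0 p) (Lam.var 0)) e) :
    (∃ p', e = Lam.app (Lam.lift 0 p') (Lam.var 0) ∧ Par p p') ∨ Par p (Lam.lam e) := by
  generalize hl : Lam.lift 0 p = l at h
  cases h with
  | app h₁ h₂ =>
    cases h₂
    subst hl
    obtain ⟨p', rfl, hp⟩ := exists_of_lift h₁
    exact .inl ⟨p', rfl, hp⟩
  | beta h₁ h₂ =>
    cases h₂
    obtain ⟨r₀, rfl, rfl⟩ := lift_eq_lam hl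
    obtain ⟨r₀', rfl, hr⟩ := exists_of_lift h₁
    rw [subst_var_lift_succ]
    exact .inr (.lam hr)

end Par

def size : Lam → ℕ
  | var _ => 1
  | app a b => size a + size b + 1
  | lam a => size a + 1

@[simp]
theorem size_lift (t : Lam) (c : ℕ) : size (lift c t) = size t := by
  induction t generalizing c with
  | var n => simp only [lift]; split_ifs <;> rfl
  | app a b iha ihb => simp only [lift, size, iha, ihb]
  | lam a iha => simp only [lift, size, iha]

theorem size_induction {P : Lam → Prop} (ind : ∀ t, (∀ s, size s < size t → P s) → P t)
    (t : Lam) : P t :=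
  (measure size).wf.induction t ind

open Classical in
/-- Complete development. In the η-case `u = lift 0 u₀`, the value `cd u₀` is obtained from
`cd u` by substituting anything for the vacuous variable `0` (`cd_lam_etaBody`); substituting
the closed term `λ 0` rather than calling `cd u₀` keeps `cd` structurally recursive and makes
it commute with lifting. -/
noncomputable def cd : Lam → Lam
  | var n => var n
  | app (lam a) b => subst 0 (cd b) (cd a)
  | app a b => app (cd a) (cd b)
  | lam (app u (var 0)) =>
    if ∃ u₀, u = lift 0 u₀ then subst 0 (lam (var 0)) (cd u) else lam (cd (app u (var 0)))
  | lam a => lam (cd a)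

theorem cd_app_lam (a b : Lam) : cd (app (lam a) b) = subst 0 (cd b) (cd a) :=
  cd.eq_2 a b

theorem cd_app {a : Lam} (b : Lam) (ha : ∀ a₀, a ≠ lam a₀) :
    cd (app a b) = app (cd a) (cd b) :=
  cd.eq_3 a b ha

theorem cd_lam {a : Lam} (ha : ∀ u, a ≠ app (lift 0 u) (var 0)) : cd (lam a) = lam (cd a) := by
  by_cases h : ∃ u, a = app u (var 0)
  · obtain ⟨u, rfl⟩ := h
    rw [cd.eq_4, if_neg]
    rintro ⟨u₀, rfl⟩
    exact ha u₀ rfl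
  · exact cd.eq_5 a fun u hu => h ⟨u, hu⟩

theorem cd_lift (t : Lam) (c : ℕ) : cd (lift c t) = lift c (cd t) := by
  induction t using size_induction generalizing c with
  | ind t ih =>
  cases t with
  | var n => simp only [lift]; split_ifs <;> simp only [cd.eq_1, lift] <;> split_ifs <;> grind
  | app a b =>
    by_cases ha : ∃ a₀, a = lam a₀
    · obtain ⟨a₀, rfl⟩ := ha
      rw [lift, lift, cd_app_lam, cd_app_lam, ih a₀ (by simp [size]; omega),
        ih b (by simp [size]), lift_subst_of_ge _ _ (Nat.zero_le c)]
    · have hla : ∀ a₀, lift c a ≠ lam a₀ :=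
        fun a₀ h => ha ((lift_eq_lam h).imp fun _ h => h.1)
      rw [lift, cd_app _ hla, cd_app _ fun a₀ h => ha ⟨a₀, h⟩, ih a (by simp [size]),
        ih b (by simp [size]), lift]
  | lam a =>
    by_cases ha : ∃ u, a = app (lift 0 u) (var 0)
    · obtain ⟨u, rfl⟩ := ha
      have hlift :
          lift c (lam (app (lift 0 u) (var 0))) = lam (app (lift 0 (lift c u)) (var 0)) := by
        simp only [lift, Nat.zero_lt_succ, if_true, lift_lift u (Nat.zero_le c)]
      rw [hlift, cd.eq_4, cd.eq_4, if_pos ⟨_, rfl⟩, if_pos ⟨_, rfl⟩,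
        lift_lift u (Nat.zero_le c), ih _ (by simp [size]; omega),
        lift_subst_of_ge _ _ (Nat.zero_le c)]
      rfl
    · have hla : ∀ u, lift (c + 1) a ≠ app (lift 0 u) (var 0) := by
        intro u h
        obtain ⟨a₁, a₂, rfl, h₁, h₂⟩ := lift_eq_app h
        obtain rfl := lift_eq_var_zero h₂.symm
        obtain ⟨q, rfl, -⟩ := exists_lift_of_lift_succ_eq_lift (Nat.zero_le c) h₁.symm
        exact ha ⟨q, rfl⟩
      rw [lift, cd_lam hla, cd_lam fun u h => ha ⟨u, h⟩, ih a (by simp [size]), lift]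

theorem cd_lam_etaBody (u : Lam) : cd (lam (app (lift 0 u) (var 0))) = cd u := by
  rw [cd.eq_4, if_pos ⟨u, rfl⟩, cd_lift, subst_lift]

theorem cd_app_etaRedex (p b : Lam) :
    cd (app (lam (app (lift 0 p) (var 0))) b) = cd (app p b) := by
  rw [cd_app_lam]
  by_cases hp : ∃ p₀, p = lam p₀
  · obtain ⟨p₀, rfl⟩ := hp
    rw [lift, cd_app_lam, cd_app_lam, cd.eq_1, cd_lift, subst_var_lift_succ]
  · have hlp : ∀ p₀, lift 0 p ≠ lam p₀ :=
      fun p₀ h => hp ((lift_eq_lam h).imp fun _ h => h.1)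
    rw [cd_app _ hlp, cd_app _ fun p₀ h => hp ⟨p₀, h⟩, cd.eq_1, cd_lift]
    simp only [subst, if_true, subst_lift]

namespace Par

theorem par_cd {t u : Lam} (h : Par t u) : Par u (cd t) := by
  induction t using size_induction generalizing u with
  | ind t ih =>
  cases h with
  | var n => exact .var n
  | @app a a' b b' h₁ h₂ =>
    by_cases ha : ∃ a₀, a = Lam.lam a₀
    · obtain ⟨a₀, rfl⟩ := ha
      rcases h₁.lam_inv with ⟨a₁, rfl, h₀⟩ | ⟨p, rfl, hp⟩
      · rw [cd_app_lam]
        exact .beta (ih a₀ (by simp [size]; omega) h₀) (ih b (by simp [size]) h₂)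
      · rw [cd_app_etaRedex]
        exact ih _ (by simp [size]; omega) (.app hp h₂)
    · rw [cd_app _ fun a₀ h => ha ⟨a₀, h⟩]
      exact .app (ih a (by simp [size]) h₁) (ih b (by simp [size]) h₂)
  | beta h₁ h₂ =>
    rw [cd_app_lam]
    exact (ih _ (by simp [size]; omega) h₁).subst (ih _ (by simp [size]) h₂) 0
  | @lam a a' h =>
    by_cases ha : ∃ p, a = Lam.app (Lam.lift 0 p) (Lam.var 0)
    · obtain ⟨p, rfl⟩ := ha
      rw [cd_lam_etaBody]
      rcases h.etaBody_inv with ⟨p', rfl, hp⟩ | hp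
      · exact .eta (ih p (by simp [size]; omega) hp)
      · exact ih p (by simp [size]; omega) hp
    · rw [cd_lam fun p h => ha ⟨p, h⟩]
      exact .lam (ih a (by simp [size]) h)
  | eta h =>
    rw [cd_lam_etaBody]
    exact ih _ (by simp [size]; omega) h

end Par

theorem BetaEtaEq.join_par {a b : Lam} (h : BetaEtaEq a b) :
    Join (ReflTransGen Par) a b := by
  have diamond :
      ∀ a b c, Par a b → Par a c → ∃ d, ReflGen Par b d ∧ ReflTransGen Par c d :=
    fun a _ _ hb hc => ⟨cd a, .single hb.par_cd, .single hc.par_cd⟩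
  exact (equivalence_join_reflTransGen diamond).eqvGen_iff.mp
    (h.mono fun _ b hs => ⟨b, .single (.of_step hs), .refl⟩)

end Lam

/-- `λy. y T`, the β-contractum of `T T`. -/
def U : Lam := lam (app (var 0) T)

theorem eq_T_of_par {x : Lam} (h : Par T x) : x = T := by
  rcases h.lam_inv with ⟨b, rfl, hb⟩ | ⟨p, hp, -⟩
  · rcases hb.lam_inv with ⟨b', rfl, hb'⟩ | ⟨p, hp, -⟩
    · cases hb' with
      | app h₁ h₂ => cases h₁; cases h₂; rfl
    · injection hp with _ h
      cases h
  · cases hp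

theorem eq_TT_or_eq_U_of_par {x : Lam} (h : Par (app T T) x) : x = app T T ∨ x = U := by
  cases h with
  | app h₁ h₂ => rw [eq_T_of_par h₁, eq_T_of_par h₂]; exact .inl rfl
  | beta h₁ h₂ =>
    cases eq_T_of_par (.lam h₁)
    rw [eq_T_of_par h₂]
    exact .inr rfl

theorem eq_U_of_par {x : Lam} (h : Par U x) : x = U := by
  rcases h.lam_inv with ⟨b, rfl, hb⟩ | ⟨p, hp, -⟩
  · cases hb with
    | app h₁ h₂ => cases h₁; rw [eq_T_of_par h₂]; rfl
  · injection hp with _ h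
    cases h

theorem eq_T_of_reflTransGen_par {x : Lam} (h : ReflTransGen Par T x) : x = T := by
  induction h with
  | refl => rfl
  | tail _ h ih => subst ih; exact eq_T_of_par h

theorem eq_TT_or_eq_U_of_reflTransGen_par {x : Lam} (h : ReflTransGen Par (app T T) x) :
    x = app T T ∨ x = U := by
  induction h with
  | refl => exact .inl rfl
  | tail _ h ih =>
    rcases ih with rfl | rfl
    · exact eq_TT_or_eq_U_of_par h
    · exact .inr (eq_U_of_par h)

/-- T_(3) = T_(2) (T T T is βη-equivalent to T T), and T_(2) is not βη-equivalent to T. -/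
theorem stmt8 : BetaEtaEq (flat T 2) (flat T 1) ∧ ¬ BetaEtaEq (flat T 1) T := by
  refine ⟨.trans _ _ _ (.rel _ _ (.appL T (.beta _ T))) (.rel _ _ (.beta _ T)), fun h => ?_⟩
  obtain ⟨d, hTT, hT⟩ := h.join_par
  obtain rfl := eq_T_of_reflTransGen_par hT
  rcases eq_TT_or_eq_U_of_reflTransGen_par hTT with h | h <;> cases h
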